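/- Let T be a triangulated category admitting arbitrary small coproducts and with a set S of compact generators. An object E of T is torsion (i.e. Hom_T(A, E) ⊗ ℚ = 0 for all compact objects A) if and only if Hom_T(A, E) ⊗ ℚ = 0 for all A ∈ S. -/

import Mathlib

/-!
Let `φ : ∐ₖ E ⟶ ∐ₖ E` (`k ∈ ℕ`) send `ιₖ` to `ιₖ - (k+2) • ιₖ₊₁`; its cone is the homotopy colimit
of `E --2--> E --3--> E --4--> ⋯`, the rationalisation of `E`. For compact `B`, `Hom(B, -)` turns
`φ` into the analogous endomorphism of `⨁ₖ Hom(B, E)`, which is always injective and is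
surjective as soon as `Hom(B, E)` is torsion. If `Hom(A⟦n⟧, E)` is torsion for all generators
`A` and all `n`, the long exact sequence of the triangle therefore kills `Hom(A⟦n⟧, cone φ)`, so
`cone φ = 0`. Then for compact `A` and `f : A ⟶ E` the map `f ≫ ι₀` lifts along `φ`, and a lift
has components `x₀ = f`, `xₘ₊₁ = (m+2) • xₘ`, i.e. `xₘ = (m+1)! • f`, which must vanish for
large `m`. The converse holds because shifts of compact objects are compact.
-/

open CategoryTheory CategoryTheory.Limits CategoryTheory.Pretriangulated

universe v u

namespace Stmt6

variable {T : Type u} [Category.{v} T] [Preadditive T] [HasZeroObject T]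
  [HasShift T ℤ] [∀ n : ℤ, (shiftFunctor T n).Additive] [Pretriangulated T]
  [HasCoproducts.{v} T]

/-- An object `A` of a triangulated (preadditive) category with small coproducts is
compact if `Hom(A, −)` commutes with small coproducts, i.e. for every family the
canonical map `⊕ᵢ Hom(A, fᵢ) → Hom(A, ∐ᵢ fᵢ)` is bijective. -/
def IsCompactObj (A : T) : Prop :=
  ∀ (ι : Type v) (_ : DecidableEq ι) (f : ι → T),
    Function.Bijective
      (fun x : DirectSum ι (fun i => A ⟶ f i) =>
        DirectSum.toAddMonoid
          (fun i => AddMonoidHom.mk' (fun g : A ⟶ f i => g ≫ Sigma.ι f i)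
            (fun g h => Preadditive.add_comp _ _ _ _ _ _)) x)

/-- An object `E` is torsion with respect to a class of test objects if all
morphism groups from those test objects to `E` are torsion abelian groups,
i.e. `Hom(A, E) ⊗ ℚ = 0`. -/
def HomTorsion (A E : T) : Prop :=
  ∀ f : A ⟶ E, ∃ n : ℕ, 0 < n ∧ n • f = 0

universe w

open DirectSum
open scoped Nat

section TelescopeDiff

variable {M : Type*} [AddCommGroup M]

noncomputable def telescopeDiff : (⨁ _ : ULift.{w} ℕ, M) →+ ⨁ _ : ULift.{w} ℕ, M :=
  toAddMonoid fun k => of (fun _ => M) k - (k.down + 2) • of (fun _ => M) ⟨k.down + 1⟩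

theorem telescopeDiff_of (k : ULift.{w} ℕ) (g : M) :
    telescopeDiff (of _ k g) = of _ k g - (k.down + 2) • of _ ⟨k.down + 1⟩ g := by
  simp [telescopeDiff]

theorem telescopeDiff_apply_zero (x : ⨁ _ : ULift.{w} ℕ, M) :
    telescopeDiff x ⟨0⟩ = x ⟨0⟩ := by
  induction x using DirectSum.induction_on with
  | zero => simp
  | of k g => simp [telescopeDiff_of, of_apply, DirectSum.smul_apply]
  | add x y hx hy => simp [hx, hy]

theorem telescopeDiff_apply_succ (x : ⨁ _ : ULift.{w} ℕ, M) (m : ℕ) :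
    telescopeDiff x ⟨m + 1⟩ = x ⟨m + 1⟩ - (m + 2) • x ⟨m⟩ := by
  induction x using DirectSum.induction_on with
  | zero => simp
  | of k g =>
    obtain ⟨k⟩ := k
    by_cases h : k = m
    · subst h
      simp [telescopeDiff_of, of_apply, DirectSum.smul_apply]
    · simp [telescopeDiff_of, of_apply, DirectSum.smul_apply, h]
  | add x y hx hy =>
    simp only [map_add, DirectSum.add_apply, hx, hy, smul_add]
    abel

theorem telescopeDiff_injective :
    Function.Injective (telescopeDiff : (⨁ _ : ULift.{w} ℕ, M) →+ _) := by
  refine (injective_iff_map_eq_zero _).2 fun x hx => ?_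
  have hcoord : ∀ m : ℕ, x ⟨m⟩ = 0 := by
    intro m
    induction m with
    | zero => simpa [hx] using (telescopeDiff_apply_zero x).symm
    | succ m ih => simpa [hx, ih] using (telescopeDiff_apply_succ x m).symm
  ext ⟨m⟩
  exact hcoord m

theorem of_mem_range_telescopeDiff {g : M} (hg : IsOfFinAddOrder g) (k : ULift.{w} ℕ) :
    of (fun _ => M) k g ∈ (telescopeDiff : (⨁ _ : ULift.{w} ℕ, M) →+ _).range := by
  obtain ⟨n, hn, hng⟩ := hg.exists_nsmul_eq_zero
  -- `Σ_{j<n} (k+2)(k+3)⋯(k+j+1) • gₖ₊ⱼ` telescopes, and its last term vanishes as `n ∣ n!`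
  let term : ℕ → ⨁ _ : ULift.{w} ℕ, M := fun j =>
    (k.down + 2).ascFactorial j • of (fun _ => M) ⟨k.down + j⟩ g
  have hterm : ∀ j, telescopeDiff (term j) = term j - term (j + 1) := by
    intro j
    simp only [term, map_nsmul, telescopeDiff_of, smul_sub, Nat.ascFactorial_succ,
      mul_comm _ (Nat.ascFactorial _ _), mul_smul, add_right_comm _ 2 j]
    rfl
  have hlast : term n = 0 := by
    obtain ⟨c, hc⟩ :=
      (Nat.dvd_factorial hn le_rfl).trans (Nat.factorial_dvd_ascFactorial (k.down + 2) n)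
    simp only [term, hc, mul_comm n c, mul_smul, ← map_nsmul, hng, map_zero, smul_zero]
  refine ⟨∑ j ∈ Finset.range n, term j, ?_⟩
  rw [map_sum, Finset.sum_congr rfl fun j _ => hterm j, Finset.sum_range_sub', hlast, sub_zero]
  simp [term]

theorem telescopeDiff_surjective (hM : IsAddTorsion M) :
    Function.Surjective (telescopeDiff : (⨁ _ : ULift.{w} ℕ, M) →+ _) := by
  refine fun y => AddMonoidHom.mem_range.1 ?_
  induction y using DirectSum.induction_on with
  | zero => exact zero_mem _
  | of k g => exact of_mem_range_telescopeDiff (hM g) k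
  | add x y hx hy => exact add_mem hx hy

theorem isOfFinAddOrder_of_telescopeDiff_eq_of {x : ⨁ _ : ULift.{w} ℕ, M} {f : M}
    (h : telescopeDiff x = of _ ⟨0⟩ f) : IsOfFinAddOrder f := by
  classical
  have hcoord : ∀ m : ℕ, x ⟨m⟩ = (m + 1)! • f := by
    intro m
    induction m with
    | zero => simpa [h] using (telescopeDiff_apply_zero x).symm
    | succ m ih =>
      have hrec := telescopeDiff_apply_succ x m
      rw [h, of_eq_of_ne _ _ _ (by simp), eq_comm, sub_eq_zero, ih, smul_smul] at hrec
      rw [hrec, Nat.factorial_succ (m + 1)]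
  obtain ⟨⟨m⟩, hm⟩ := Infinite.exists_notMem_finset (DFinsupp.support x)
  rw [DFinsupp.notMem_support_iff, hcoord] at hm
  exact isOfFinAddOrder_iff_nsmul_eq_zero.2 ⟨_, Nat.factorial_pos _, hm⟩

end TelescopeDiff

theorem homTorsion_iff_isAddTorsion {C : Type*} [Category C] [Preadditive C] {A E : C} :
    HomTorsion A E ↔ IsAddTorsion (A ⟶ E) :=
  forall_congr' fun _ => isOfFinAddOrder_iff_nsmul_eq_zero.symm

section Coproducts

variable {C : Type*} [Category.{v} C] [Preadditive C] [HasCoproducts.{v} C]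

noncomputable def toHomSigma (A : C) {ι : Type v} [DecidableEq ι] (f : ι → C) :
    (⨁ i, (A ⟶ f i)) →+ (A ⟶ ∐ f) :=
  toAddMonoid fun i => AddMonoidHom.mk' (fun g : A ⟶ f i => g ≫ Sigma.ι f i)
    (fun _ _ => Preadditive.add_comp _ _ _ _ _ _)

@[simp]
theorem toHomSigma_of (A : C) {ι : Type v} [DecidableEq ι] (f : ι → C) (i : ι)
    (g : A ⟶ f i) : toHomSigma A f (of _ i g) = g ≫ Sigma.ι f i :=
  toAddMonoid_of _ _ _

noncomputable def telescope (E : C) :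
    (∐ fun _ : ULift.{v} ℕ => E) ⟶ ∐ fun _ : ULift.{v} ℕ => E :=
  Sigma.desc fun k => Sigma.ι (fun _ : ULift.{v} ℕ => E) k -
    (k.down + 2) • Sigma.ι (fun _ : ULift.{v} ℕ => E) ⟨k.down + 1⟩

@[simp]
theorem ι_telescope (E : C) (k : ULift.{v} ℕ) :
    Sigma.ι (fun _ : ULift.{v} ℕ => E) k ≫ telescope E =
      Sigma.ι (fun _ : ULift.{v} ℕ => E) k -
        (k.down + 2) • Sigma.ι (fun _ : ULift.{v} ℕ => E) ⟨k.down + 1⟩ :=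
  Sigma.ι_desc _ _

theorem toHomSigma_telescopeDiff (B E : C) (x : ⨁ _ : ULift.{v} ℕ, (B ⟶ E)) :
    toHomSigma B _ (telescopeDiff x) = toHomSigma B _ x ≫ telescope E := by
  induction x using DirectSum.induction_on with
  | zero => simp
  | of k g => simp [telescopeDiff_of, Preadditive.comp_sub]
  | add x y hx hy => simp [hx, hy]

theorem sigmaComparison_comp_map_telescope {D : Type*} [Category.{v} D] [Preadditive D]
    [HasCoproducts.{v} D] (F : C ⥤ D) [F.Additive] (E : C) :
    sigmaComparison F (fun _ : ULift.{v} ℕ => E) ≫ F.map (telescope E) =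
      telescope (F.obj E) ≫ sigmaComparison F (fun _ : ULift.{v} ℕ => E) := by
  ext k
  rw [← Category.assoc _ (telescope _), ι_telescope]
  simp [← F.map_comp, Preadditive.sub_comp]

namespace IsCompactObj

variable {A : C} (hA : IsCompactObj A)
include hA

theorem bijective_toHomSigma {ι : Type v} [DecidableEq ι] (f : ι → C) :
    Function.Bijective (toHomSigma A f) :=
  hA ι _ f

theorem of_adjunction {D : Type*} [Category.{v} D] [Preadditive D] [HasCoproducts.{v} D]
    {L : C ⥤ D} {G : D ⥤ C} (adj : L ⊣ G) [L.Additive] [PreservesColimitsOfSize.{v, v} G] :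
    IsCompactObj (L.obj A) := by
  intro ι _ f
  have hsq : (adj.homAddEquiv A (∐ f) : _ →+ _).comp (toHomSigma (L.obj A) f) =
      ((Preadditive.rightComp A (sigmaComparison G f)).comp
        (toHomSigma A fun i => G.obj (f i))).comp
        (DirectSum.map fun i => (adj.homAddEquiv A (f i) : _ →+ _)) := by
    ext i g
    simp [adj.homEquiv_naturality_right, Preadditive.rightComp]
  refine ((adj.homAddEquiv A (∐ f)).bijective.of_comp_iff' (toHomSigma (L.obj A) f)).1 ?_
  rw [← AddMonoidHom.coe_coe, ← AddMonoidHom.coe_comp, hsq]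
  exact ((Iso.homToEquiv (asIso (sigmaComparison G f))).bijective.comp
    (hA.bijective_toHomSigma _)).comp
    ⟨(map_injective _).2 fun i => (adj.homAddEquiv A (f i)).injective,
      (map_surjective _).2 fun i => (adj.homAddEquiv A (f i)).surjective⟩

theorem shift [HasShift C ℤ] [∀ n : ℤ, (shiftFunctor C n).Additive] (n : ℤ) :
    IsCompactObj (A⟦n⟧) :=
  hA.of_adjunction (shiftEquiv C n).toAdjunction

theorem comp_telescope_injective (E : C) :
    Function.Injective fun g : A ⟶ ∐ (fun _ : ULift.{v} ℕ => E) => g ≫ telescope E := by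
  have hθ := hA.bijective_toHomSigma fun _ : ULift.{v} ℕ => E
  intro g₁ g₂ h
  obtain ⟨x₁, rfl⟩ := hθ.2 g₁
  obtain ⟨x₂, rfl⟩ := hθ.2 g₂
  simp only [← toHomSigma_telescopeDiff] at h
  rw [telescopeDiff_injective (hθ.1 h)]

theorem comp_telescope_surjective {E : C} (hAE : HomTorsion A E) :
    Function.Surjective fun g : A ⟶ ∐ (fun _ : ULift.{v} ℕ => E) => g ≫ telescope E := by
  intro g
  obtain ⟨y, rfl⟩ := (hA.bijective_toHomSigma _).2 g
  obtain ⟨x, rfl⟩ := telescopeDiff_surjective (homTorsion_iff_isAddTorsion.1 hAE) y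
  exact ⟨toHomSigma A _ x, (toHomSigma_telescopeDiff A E x).symm⟩

theorem comp_map_telescope_injective (F : C ⥤ C) [F.Additive]
    [PreservesColimitsOfShape (Discrete (ULift.{v} ℕ)) F] (E : C) :
    Function.Injective
      fun g : A ⟶ F.obj (∐ fun _ : ULift.{v} ℕ => E) => g ≫ F.map (telescope E) := by
  let c := sigmaComparison F fun _ : ULift.{v} ℕ => E
  have hfac : (fun g : A ⟶ F.obj _ => g ≫ F.map (telescope E)) =
      (· ≫ c) ∘ (fun g => g ≫ telescope (F.obj E)) ∘ (· ≫ inv c) := by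
    funext g
    simp [c, ← sigmaComparison_comp_map_telescope]
  rw [hfac]
  exact (Iso.homToEquiv (asIso c)).injective.comp
    ((hA.comp_telescope_injective _).comp (Iso.homToEquiv (asIso c).symm).injective)

theorem isOfFinAddOrder_of_comp_telescope_eq {E : C} {f : A ⟶ E}
    {g : A ⟶ ∐ fun _ : ULift.{v} ℕ => E}
    (hg : g ≫ telescope E = f ≫ Sigma.ι (fun _ : ULift.{v} ℕ => E) ⟨0⟩) :
    IsOfFinAddOrder f := by
  have hθ := hA.bijective_toHomSigma fun _ : ULift.{v} ℕ => E
  obtain ⟨x, rfl⟩ := hθ.2 g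
  refine isOfFinAddOrder_of_telescopeDiff_eq_of (x := x) (hθ.1 ?_)
  rw [toHomSigma_telescopeDiff, hg, toHomSigma_of]

end IsCompactObj

end Coproducts

theorem Triangle.eq_zero_of_comp_mor₁_surjective_of_injective {C : Type*} [Category C]
    [Preadditive C] [HasZeroObject C] [HasShift C ℤ] [∀ n : ℤ, (shiftFunctor C n).Additive]
    [Pretriangulated C] {Tr : Triangle C} (hTr : Tr ∈ distTriang C) {B : C}
    (hsurj : Function.Surjective fun g : B ⟶ Tr.obj₁ => g ≫ Tr.mor₁)
    (hinj : Function.Injective fun g : B ⟶ Tr.obj₁⟦(1 : ℤ)⟧ => g ≫ Tr.mor₁⟦1⟧')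
    (f : B ⟶ Tr.obj₃) : f = 0 := by
  have hf₃ : f ≫ Tr.mor₃ = 0 :=
    hinj (by simp [comp_distTriang_mor_zero₃₁ _ hTr])
  obtain ⟨g, rfl⟩ := Tr.coyoneda_exact₃ hTr f hf₃
  obtain ⟨h, rfl⟩ := hsurj g
  simp [comp_distTriang_mor_zero₁₂ _ hTr]

theorem torsion_iff_torsion_on_generators_general
    (S : Set T)
    (hcpt : ∀ A ∈ S, IsCompactObj A)
    (hgen : ∀ X : T, (∀ A ∈ S, ∀ n : ℤ, ∀ f : A⟦n⟧ ⟶ X, f = 0) → IsZero X)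
    (E : T) :
    (∀ A : T, IsCompactObj A → HomTorsion A E) ↔
      (∀ A ∈ S, ∀ n : ℤ, HomTorsion (A⟦n⟧) E) := by
  refine ⟨fun h A hA n => h _ ((hcpt A hA).shift n), fun h A hA => ?_⟩
  obtain ⟨C, _, _, hTr⟩ := distinguished_cocone_triangle (telescope E)
  have hC : IsZero C := hgen C fun B hB n =>
    Triangle.eq_zero_of_comp_mor₁_surjective_of_injective hTr
      (((hcpt B hB).shift n).comp_telescope_surjective (h B hB n))
      (((hcpt B hB).shift n).comp_map_telescope_injective (shiftFunctor T (1 : ℤ)) E)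
  refine homTorsion_iff_isAddTorsion.2 fun f => ?_
  obtain ⟨g, hg⟩ := Triangle.coyoneda_exact₂ _ hTr
    (f ≫ Sigma.ι (fun _ : ULift.{v} ℕ => E) ⟨0⟩) (hC.eq_of_tgt _ _)
  exact hA.isOfFinAddOrder_of_comp_telescope_eq hg.symm

/-- Let `T` be a triangulated category admitting arbitrary small
coproducts and with a set `S` of compact generators.  An object `E` of `T` is
torsion (i.e. `Hom_T(A, E) ⊗ ℚ = 0` for all compact objects `A`) if and only if
`Hom_T(A⟦n⟧, E) ⊗ ℚ = 0` for all `A ∈ S` and all shifts `n : ℤ`. -/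
theorem torsion_iff_torsion_on_generators [IsTriangulated T]
    (S : Set T)
    (hcpt : ∀ A ∈ S, IsCompactObj A)
    (hgen : ∀ X : T, (∀ A ∈ S, ∀ n : ℤ, ∀ f : A⟦n⟧ ⟶ X, f = 0) → IsZero X)
    (E : T) :
    (∀ A : T, IsCompactObj A → HomTorsion A E) ↔
      (∀ A ∈ S, ∀ n : ℤ, HomTorsion (A⟦n⟧) E) :=
  torsion_iff_torsion_on_generators_general S hcpt hgen E

end Stmt6
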